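/- arXiv:math/0702367 — 3 statements merged into one kernel-verified Lean document; each statement's English description precedes it below -/
import Mathlib

section
/- The function Z is nondecreasing on [0, ∞), right-continuous, and satisfies 0 ≤ Z_t < 1 for every t ≥ 0 with Z_0 = 0; moreover, if μ > 0 then Z_t → 1 as t → ∞. -/
open MeasureTheory Filter

private lemma neg_log_le_two_mul {y : ℝ} (h0 : 0 < y) (h2 : y ≤ 1/2) :
    -Real.log (1 - y) ≤ 2 * y := by
  have h1 : 0 < 1 - y := by linarith
  have hlog := Real.log_le_sub_one_of_pos (inv_pos.2 h1)
  rw [Real.log_inv] at hlog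
  have hinv : (1 - y)⁻¹ ≤ 1 + 2 * y := by
    rw [inv_eq_one_div, div_le_iff₀ h1]; nlinarith
  linarith

private lemma summable_neglog {x : ℝ → ℝ} {S : Set ℝ} (hx : ∀ τ ∈ S, x τ ∈ Set.Ioo (0:ℝ) 1)
    (hs : Summable fun τ : S => x ↑τ) :
    Summable fun τ : S => -Real.log (1 - x ↑τ) := by
  apply Summable.of_norm_bounded_eventually (g := fun τ : S => 2 * x ↑τ) (hs.mul_left 2)
  have h2 : ∀ᶠ τ : S in cofinite, x ↑τ < 1/2 :=
    hs.tendsto_cofinite_zero.eventually (gt_mem_nhds (by norm_num : (0:ℝ) < 1/2))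
  filter_upwards [h2] with τ hτ
  obtain ⟨hp, hl⟩ := hx τ τ.2
  have hnn : 0 ≤ -Real.log (1 - x ↑τ) :=
    neg_nonneg.2 (Real.log_nonpos (by linarith) (by linarith))
  rw [Real.norm_eq_abs, abs_of_nonneg hnn]
  exact neg_log_le_two_mul hp hτ.le
set_option maxHeartbeats 1000000 in
/-- **Path properties of a multiplicative subordinator.**
Let `μ ≥ 0`, let `T ⊆ (0,∞)` be a countable set of jump times with jump sizes
`x τ ∈ (0,1)` satisfying the local summability `∑_{τ ∈ T, τ ≤ t} x τ < ∞` for all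
`t ≥ 0`, and let `Z t = 1 - e^{-μ t} ∏_{τ ∈ T, τ ≤ t} (1 - x τ)` for `t ≥ 0`.
Then `Z` is nondecreasing on `[0,∞)`, right-continuous, satisfies `0 ≤ Z t < 1`
for all `t ≥ 0` and `Z 0 = 0`, and moreover `Z t → 1` as `t → ∞` whenever `μ > 0`. -/
theorem multiplicative_subordinator_path_properties
    (μ : ℝ) (hμ : 0 ≤ μ)
    (T : Set ℝ) (hTcount : T.Countable) (hTpos : T ⊆ Set.Ioi (0:ℝ))
    (x : ℝ → ℝ) (hx : ∀ τ ∈ T, x τ ∈ Set.Ioo (0:ℝ) 1)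
    (hsum : ∀ t : ℝ, 0 ≤ t → Summable (fun τ : ↥(T ∩ Set.Iic t) => x ↑τ))
    (Z : ℝ → ℝ)
    (hZ : ∀ t : ℝ, 0 ≤ t →
      Z t = 1 - Real.exp (-μ * t) * ∏' τ : ↥(T ∩ Set.Iic t), (1 - x ↑τ)) :
    MonotoneOn Z (Set.Ici 0) ∧
    (∀ t : ℝ, 0 ≤ t → ContinuousWithinAt Z (Set.Ici t) t) ∧
    (∀ t : ℝ, 0 ≤ t → 0 ≤ Z t ∧ Z t < 1) ∧
    Z 0 = 0 ∧
    (0 < μ → Tendsto Z atTop (nhds 1)) := by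
  classical
  obtain ⟨G, hG⟩ : ∃ G : ℝ → ℝ, G = fun τ => -Real.log (1 - x τ) := ⟨_, rfl⟩
  have hGnn : ∀ τ ∈ T, 0 ≤ G τ := by
    intro τ hτ
    obtain ⟨h1, h2⟩ := hx τ hτ
    rw [hG]
    exact neg_nonneg.2 (Real.log_nonpos (by linarith) (by linarith))
  have hGsum : ∀ t : ℝ, 0 ≤ t → Summable (fun τ : ↥(T ∩ Set.Iic t) => G ↑τ) := by
    intro t ht
    rw [hG]
    exact summable_neglog (fun τ hτ => hx τ hτ.1) (hsum t ht)
  obtain ⟨N, hN⟩ : ∃ N : ℝ → ℝ, N = fun t => ∑' τ : ↥(T ∩ Set.Iic t), G ↑τ := ⟨_, rfl⟩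
  have hNnn : ∀ t : ℝ, 0 ≤ N t := by
    intro t
    simp only [hN]
    exact tsum_nonneg (fun τ => hGnn τ.1 τ.2.1)
  -- closed form
  have hZ' : ∀ t : ℝ, 0 ≤ t → Z t = 1 - Real.exp (-(μ * t + N t)) := by
    intro t ht
    rw [hZ t ht]
    have hprod : (∏' τ : ↥(T ∩ Set.Iic t), (1 - x ↑τ))
        = Real.exp (∑' τ : ↥(T ∩ Set.Iic t), Real.log (1 - x ↑τ)) := by
      have hsl : Summable (fun τ : ↥(T ∩ Set.Iic t) => Real.log (1 - x ↑τ)) := by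
        have := (hGsum t ht).neg
        simpa [hG] using this
      have := Real.rexp_tsum_eq_tprod (f := fun τ : ↥(T ∩ Set.Iic t) => 1 - x ↑τ)
        (fun τ => by show (0:ℝ) < 1 - x ↑τ; linarith [(hx τ.1 τ.2.1).2]) hsl
      exact this.symm
    have hNt : N t = -∑' τ : ↥(T ∩ Set.Iic t), Real.log (1 - x ↑τ) := by
      simp only [hN, hG]
      exact tsum_neg
    rw [hprod, ← Real.exp_add]
    congr 1
    rw [show (∑' τ : ↥(T ∩ Set.Iic t), Real.log (1 - x ↑τ)) = -N t by rw [hNt]; ring]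
    ring
  -- monotonicity of N
  have hNmono : ∀ ⦃s t : ℝ⦄, 0 ≤ s → s ≤ t → N s ≤ N t := by
    intro s t hs hst
    simp only [hN]
    apply Summable.tsum_le_tsum_of_inj
      (fun τ : ↥(T ∩ Set.Iic s) => (⟨τ.1, τ.2.1, τ.2.2.trans hst⟩ : ↥(T ∩ Set.Iic t)))
    · intro a b hab
      simp only [Subtype.mk.injEq] at hab
      exact Subtype.ext (congrArg Subtype.val hab :)
    · intro c _
      exact hGnn c.1 c.2.1
    · intro i
      exact le_rfl
    · exact hGsum s hs
    · exact hGsum t (hs.trans hst)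
  -- summability on subsets
  have hsub : ∀ {A B : Set ℝ}, A ⊆ B → Summable (fun τ : B => G ↑τ) →
      Summable (fun τ : A => G ↑τ) := by
    intro A B hAB h
    exact h.comp_injective (Set.inclusion_injective hAB)
  -- splitting
  have hsplit : ∀ {t₀ t : ℝ}, 0 ≤ t₀ → t₀ ≤ t →
      N t = N t₀ + ∑' τ : ↥(T ∩ Set.Ioc t₀ t), G ↑τ := by
    intro t₀ t h0 hle
    have hset : T ∩ Set.Iic t = (T ∩ Set.Iic t₀) ∪ (T ∩ Set.Ioc t₀ t) := by
      rw [← Set.inter_union_distrib_left, Set.Iic_union_Ioc_eq_Iic hle]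
    have hd : Disjoint (T ∩ Set.Iic t₀) (T ∩ Set.Ioc t₀ t) := by
      rw [Set.disjoint_left]
      rintro τ ⟨_, h1⟩ ⟨_, h2⟩
      exact absurd h2.1 (not_lt.2 h1)
    have h1 : Summable (fun τ : ↥(T ∩ Set.Iic t₀) => G ↑τ) := hGsum t₀ h0
    have h2 : Summable (fun τ : ↥(T ∩ Set.Ioc t₀ t) => G ↑τ) := by
      refine hsub ?_ (hGsum t (h0.trans hle))
      rintro τ ⟨ha, hb⟩
      exact ⟨ha, hb.2⟩
    simp only [hN]
    rw [hset]
    exact Summable.tsum_union_disjoint hd h1 h2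
  -- continuity of N from the right
  have hNcont : ∀ t₀ : ℝ, 0 ≤ t₀ → ContinuousWithinAt N (Set.Ici t₀) t₀ := by
    intro t₀ ht₀
    rw [Metric.continuousWithinAt_iff]
    intro ε hε
    have hS1 : Summable (fun τ : ↥(T ∩ Set.Iic (t₀ + 1)) => G ↑τ) := hGsum _ (by linarith)
    have htend := tendsto_tsum_compl_atTop_zero (fun τ : ↥(T ∩ Set.Iic (t₀ + 1)) => G ↑τ)
    obtain ⟨F, hF⟩ := (htend.eventually (gt_mem_nhds hε)).exists
    obtain ⟨δ, hδpos, hδ⟩ : ∃ δ > 0, ∀ τ ∈ F, t₀ < (τ : ℝ) → t₀ + δ ≤ (τ : ℝ) := by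
      rcases (F.filter (fun τ : ↥(T ∩ Set.Iic (t₀ + 1)) => t₀ < τ.1)).eq_empty_or_nonempty
        with hfe | hne
      · refine ⟨1, one_pos, fun τ hτ ht => ?_⟩
        have hmem : τ ∈ F.filter (fun τ : ↥(T ∩ Set.Iic (t₀ + 1)) => t₀ < τ.1) :=
          Finset.mem_filter.2 ⟨hτ, ht⟩
        rw [hfe] at hmem
        simp at hmem
      · obtain ⟨b, hb, hbmin⟩ := Finset.exists_min_image _
          (fun τ : ↥(T ∩ Set.Iic (t₀ + 1)) => τ.1) hne
        have hbt : t₀ < (b : ℝ) := (Finset.mem_filter.1 hb).2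
        refine ⟨(b : ℝ) - t₀, by linarith, fun τ hτ ht => ?_⟩
        have := hbmin τ (Finset.mem_filter.2 ⟨hτ, ht⟩)
        linarith
    refine ⟨min δ 1, lt_min hδpos one_pos, ?_⟩
    intro t ht hdist
    have ht1 : t₀ ≤ t := ht
    rw [Real.dist_eq, abs_of_nonneg (by linarith)] at hdist
    have ht2 : t < t₀ + δ := by
      have := min_le_left δ 1; linarith
    have ht3 : t ≤ t₀ + 1 := by
      have := min_le_right δ 1; linarith
    have hmap : ∀ τ : ↥(T ∩ Set.Ioc t₀ t),
        (⟨τ.1, τ.2.1, τ.2.2.2.trans ht3⟩ : ↥(T ∩ Set.Iic (t₀ + 1))) ∉ F := by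
      intro τ hmem
      have h1 := hδ _ hmem τ.2.2.1
      have h2 := τ.2.2.2
      simp only at h1 h2
      linarith
    have key : (∑' τ : ↥(T ∩ Set.Ioc t₀ t), G ↑τ)
        ≤ ∑' τ : {τ : ↥(T ∩ Set.Iic (t₀ + 1)) // τ ∉ F}, G ↑↑τ := by
      apply Summable.tsum_le_tsum_of_inj
        (fun τ : ↥(T ∩ Set.Ioc t₀ t) =>
          (⟨⟨τ.1, τ.2.1, τ.2.2.2.trans ht3⟩, hmap τ⟩ : {τ : ↥(T ∩ Set.Iic (t₀ + 1)) // τ ∉ F}))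
      · intro a b hab
        simp only [Subtype.mk.injEq] at hab
        exact Subtype.ext (congrArg Subtype.val hab :)
      · intro c _
        exact hGnn c.1.1 c.1.2.1
      · intro i
        exact le_rfl
      · refine hsub ?_ hS1
        rintro τ ⟨ha, hb⟩
        exact ⟨ha, hb.2.trans ht3⟩
      · exact hS1.subtype _
    have hmono := hNmono ht₀ ht1
    rw [Real.dist_eq, abs_of_nonneg (by linarith)]
    rw [hsplit ht₀ ht1]
    linarith
  refine ⟨?_, ?_, ?_, ?_, ?_⟩
  · -- monotone
    intro a ha b hb hab
    rw [hZ' a ha, hZ' b hb]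
    have h1 : μ * a + N a ≤ μ * b + N b :=
      add_le_add (mul_le_mul_of_nonneg_left hab hμ) (hNmono ha hab)
    have h2 := Real.exp_le_exp.2 (neg_le_neg h1)
    linarith
  · -- right continuity
    intro t₀ ht₀
    have h1 : ContinuousWithinAt (fun t => μ * t + N t) (Set.Ici t₀) t₀ :=
      ((continuous_const.mul continuous_id).continuousWithinAt).add (hNcont t₀ ht₀)
    have h2 : ContinuousWithinAt (fun t => 1 - Real.exp (-(μ * t + N t))) (Set.Ici t₀) t₀ :=
      continuousWithinAt_const.sub (Real.continuous_exp.continuousAt.comp_continuousWithinAt h1.neg)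
    apply h2.congr
    · intro y hy
      exact hZ' y (ht₀.trans hy)
    · exact hZ' t₀ ht₀
  · -- bounds
    intro t ht
    rw [hZ' t ht]
    constructor
    · have harg : -(μ * t + N t) ≤ 0 := by
        have := hNnn t
        have : 0 ≤ μ * t := mul_nonneg hμ ht
        linarith [hNnn t]
      have := Real.exp_le_exp.2 harg
      rw [Real.exp_zero] at this
      linarith
    · linarith [Real.exp_pos (-(μ * t + N t))]
  · -- Z 0 = 0
    have he : T ∩ Set.Iic (0:ℝ) = ∅ := by
      ext τ
      simp only [Set.mem_inter_iff, Set.mem_Iic, Set.mem_empty_iff_false, iff_false, not_and]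
      intro hT hle
      exact absurd (hTpos hT) (by simp; linarith)
    rw [hZ 0 le_rfl, he, tprod_empty]
    simp
  · -- limit
    intro hμpos
    have h1 : Tendsto (fun t : ℝ => μ * t) atTop atTop :=
      Tendsto.const_mul_atTop hμpos tendsto_id
    have h2 : Tendsto (fun t : ℝ => Real.exp (-(μ * t))) atTop (nhds 0) :=
      Real.tendsto_exp_atBot.comp (tendsto_neg_atTop_atBot.comp h1)
    have h3 : Tendsto (fun t : ℝ => 1 - Real.exp (-(μ * t))) atTop (nhds 1) := by
      simpa using h2.const_sub 1
    apply tendsto_of_tendsto_of_tendsto_of_le_of_le' h3 tendsto_const_nhds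
    · filter_upwards [eventually_ge_atTop (0:ℝ)] with t ht
      rw [hZ' t ht]
      have : Real.exp (-(μ * t + N t)) ≤ Real.exp (-(μ * t)) :=
        Real.exp_le_exp.2 (by linarith [hNnn t])
      linarith
    · filter_upwards [eventually_ge_atTop (0:ℝ)] with t ht
      rw [hZ' t ht]
      linarith [Real.exp_pos (-(μ * t + N t))]
end

section
/- For every jump time τ₀ ∈ T, the jump of Z at τ₀ equals the current litter size: Z_{τ₀} - lim_{s↑τ₀} Z_s = x_{τ₀} · e^{-μ τ₀} · ∏_{τ ∈ T, τ < τ₀} (1 - x_τ). -/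
open MeasureTheory Filter

set_option maxHeartbeats 1000000

lemma abs_log_one_sub_le (y : ℝ) (hy : 0 < y) (hy2 : y ≤ 1/2) :
    |Real.log (1 - y)| ≤ 2 * y := by
  have h1 : (0:ℝ) < 1 - y := by linarith
  have h2 : Real.log ((1-y)⁻¹) ≤ (1-y)⁻¹ - 1 := Real.log_le_sub_one_of_pos (by positivity)
  rw [Real.log_inv] at h2
  have h3 : (1-y)⁻¹ ≤ 1 + 2*y := by
    rw [inv_eq_one_div, div_le_iff₀ h1]; nlinarith
  have h4 : Real.log (1 - y) ≤ 0 := Real.log_nonpos (by linarith) (by linarith)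
  rw [abs_of_nonpos h4]; linarith

/-- **Jumps of a multiplicative subordinator are the litter sizes.**
Let `μ ≥ 0`, let `T ⊆ (0,∞)` be a countable set of jump times with jump sizes
`x τ ∈ (0,1)` satisfying the local summability `∑_{τ ∈ T, τ ≤ t} x τ < ∞` for all
`t ≥ 0`, and let `Z t = 1 - e^{-μ t} ∏_{τ ∈ T, τ ≤ t} (1 - x τ)` for `t ≥ 0`.
Then for every `τ₀ ∈ T` the left limit `lim_{s ↑ τ₀} Z s` exists and the jump of `Z`
at `τ₀` equals the current litter size:
`Z τ₀ - lim_{s ↑ τ₀} Z s = x τ₀ · e^{-μ τ₀} · ∏_{τ ∈ T, τ < τ₀} (1 - x τ)`. -/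
theorem multiplicative_subordinator_jump
    (μ : ℝ) (hμ : 0 ≤ μ)
    (T : Set ℝ) (hTcount : T.Countable) (hTpos : T ⊆ Set.Ioi (0:ℝ))
    (x : ℝ → ℝ) (hx : ∀ τ ∈ T, x τ ∈ Set.Ioo (0:ℝ) 1)
    (hsum : ∀ t : ℝ, 0 ≤ t → Summable (fun τ : ↥(T ∩ Set.Iic t) => x ↑τ))
    (Z : ℝ → ℝ)
    (hZ : ∀ t : ℝ, 0 ≤ t →
      Z t = 1 - Real.exp (-μ * t) * ∏' τ : ↥(T ∩ Set.Iic t), (1 - x ↑τ))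
    (τ₀ : ℝ) (hτ₀ : τ₀ ∈ T) :
    Tendsto Z (nhdsWithin τ₀ (Set.Iio τ₀))
      (nhds (Z τ₀ -
        x τ₀ * Real.exp (-μ * τ₀) * ∏' τ : ↥(T ∩ Set.Iio τ₀), (1 - x ↑τ))) := by
  classical
  set g : ℝ → ℝ := fun τ => Real.log (1 - x τ) with hg_def
  have hτ₀pos : 0 < τ₀ := hTpos hτ₀
  set S : Set ℝ := T ∩ Set.Iio τ₀ with hS_def
  set A : Set ℝ := T ∩ Set.Iic τ₀ with hA_def
  -- summability of |g| on A
  have hxA : Summable (fun τ : ↥A => x ↑τ) := hsum τ₀ hτ₀pos.le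
  have hgA : Summable (fun τ : ↥A => |g ↑τ|) := by
    apply Summable.of_norm_bounded_eventually (g := fun τ : ↥A => 2 * x ↑τ) (hxA.mul_left 2)
    have hev : ∀ᶠ τ : ↥A in cofinite, x ↑τ < 1/2 :=
      hxA.tendsto_cofinite_zero (Iio_mem_nhds (by norm_num : (0:ℝ) < 1/2))
    filter_upwards [hev] with τ hτ
    have hxm := hx ↑τ τ.2.1
    rw [Real.norm_eq_abs, abs_abs]
    exact abs_log_one_sub_le (x ↑τ) hxm.1 hτ.le
  have hgA' : Summable (A.indicator fun τ => |g τ|) :=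
    summable_subtype_iff_indicator.mp hgA
  -- summability on subsets of A
  have habs : ∀ B : Set ℝ, B ⊆ A → Summable (B.indicator fun τ => |g τ|) := by
    intro B hB
    have : B.indicator (fun τ => |g τ|) = B.indicator (A.indicator fun τ => |g τ|) := by
      rw [Set.indicator_indicator, Set.inter_eq_left.mpr hB]
    rw [this]
    exact hgA'.indicator B
  have hsub : ∀ B : Set ℝ, B ⊆ A → Summable (fun τ : ↥B => g ↑τ) := by
    intro B hB
    have h1 : Summable (fun τ : ↥B => |g ↑τ|) :=
      summable_subtype_iff_indicator.mpr (habs B hB)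
    exact h1.of_abs
  have hSsubA : S ⊆ A := Set.inter_subset_inter_right T Set.Iio_subset_Iic_self
  -- products as exponentials
  have hprod : ∀ s : ℝ, s ≤ τ₀ →
      (∏' τ : ↥(T ∩ Set.Iic s), (1 - x ↑τ))
        = Real.exp (∑' τ : ↥(T ∩ Set.Iic s), g ↑τ) := by
    intro s hs
    have hB : T ∩ Set.Iic s ⊆ A :=
      Set.inter_subset_inter_right T (Set.Iic_subset_Iic.mpr hs)
    have hsum' : Summable (fun τ : ↥(T ∩ Set.Iic s) => g ↑τ) := hsub _ hB
    have hp := hsum'.hasSum.rexp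
    have heq : (Real.exp ∘ fun τ : ↥(T ∩ Set.Iic s) => g ↑τ)
        = fun τ : ↥(T ∩ Set.Iic s) => 1 - x ↑τ := by
      funext τ
      have := hx ↑τ (hB τ.2).1
      simp only [Function.comp_apply, hg_def]
      exact Real.exp_log (by linarith [this.2])
    rw [heq] at hp
    exact hp.tprod_eq
  have hprodS : (∏' τ : ↥S, (1 - x ↑τ)) = Real.exp (∑' τ : ↥S, g ↑τ) := by
    have hsum' : Summable (fun τ : ↥S => g ↑τ) := hsub _ hSsubA
    have hp := hsum'.hasSum.rexp
    have heq : (Real.exp ∘ fun τ : ↥S => g ↑τ) = fun τ : ↥S => 1 - x ↑τ := by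
      funext τ
      have := hx ↑τ τ.2.1
      simp only [Function.comp_apply, hg_def]
      exact Real.exp_log (by linarith [this.2])
    rw [heq] at hp
    exact hp.tprod_eq
  -- the value identity
  have hAeq : A = S ∪ {τ₀} := by
    ext y
    simp only [hA_def, hS_def, Set.mem_inter_iff, Set.mem_Iic, Set.mem_Iio, Set.mem_union,
      Set.mem_singleton_iff]
    constructor
    · rintro ⟨hy, hle⟩
      rcases hle.lt_or_eq with h | h
      · exact Or.inl ⟨hy, h⟩
      · exact Or.inr h
    · rintro (⟨hy, hlt⟩ | rfl)
      · exact ⟨hy, hlt.le⟩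
      · exact ⟨hτ₀, le_rfl⟩
  have hsumA' : ∑' τ : ↥A, g ↑τ = (∑' τ : ↥S, g ↑τ) + g τ₀ := by
    have hdisj : Disjoint S {τ₀} := by
      rw [Set.disjoint_singleton_right]
      rintro ⟨-, h⟩
      exact lt_irrefl τ₀ h
    have hsingle : Summable (fun τ : ↥({τ₀} : Set ℝ) => g ↑τ) := by
      haveI : Finite ↥({τ₀} : Set ℝ) := (Set.finite_singleton τ₀).to_subtype
      exact Summable.of_finite
    rw [hAeq, Summable.tsum_union_disjoint (f := g) hdisj (hsub S hSsubA) hsingle, tsum_singleton]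
  have hxτ₀ := hx τ₀ hτ₀
  have hgτ₀ : Real.exp (g τ₀) = 1 - x τ₀ := Real.exp_log (by linarith [hxτ₀.2])
  have hL : Z τ₀ - x τ₀ * Real.exp (-μ * τ₀) * ∏' τ : ↥S, (1 - x ↑τ)
      = 1 - Real.exp (-μ * τ₀) * Real.exp (∑' τ : ↥S, g ↑τ) := by
    rw [hZ τ₀ hτ₀pos.le, hprodS]
    have h5 : (∏' τ : ↥(T ∩ Set.Iic τ₀), (1 - x ↑τ))
        = Real.exp (∑' τ : ↥A, g ↑τ) := hprod τ₀ le_rfl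
    rw [h5, hsumA', Real.exp_add, hgτ₀]
    ring
  rw [hL]
  -- the left-limit of the sums
  have hF : Tendsto (fun s => ∑' τ : ↥(T ∩ Set.Iic s), g ↑τ)
      (nhdsWithin τ₀ (Set.Iio τ₀)) (nhds (∑' τ : ↥S, g ↑τ)) := by
    rw [Metric.tendsto_nhdsWithin_nhds]
    intro ε hε
    set h : ℝ → ℝ := S.indicator (fun τ => |g τ|) with hh_def
    have hhsum : Summable h := habs S hSsubA
    have hhnonneg : ∀ y, 0 ≤ h y := fun y =>
      Set.indicator_nonneg (fun z _ => abs_nonneg _) y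
    have htail := tendsto_tsum_compl_atTop_zero h
    have hev : ∀ᶠ F : Finset ℝ in atTop, ∑' τ : {y // y ∉ F}, h ↑τ < ε :=
      (tendsto_order.1 htail).2 ε hε
    obtain ⟨F, hFlt⟩ := hev.exists
    obtain ⟨s₀, hs₀lt, hs₀⟩ : ∃ s₀, s₀ < τ₀ ∧ ∀ y ∈ F, y < τ₀ → y ≤ s₀ := by
      by_cases hne : (F.filter (fun y => y < τ₀)).Nonempty
      · refine ⟨(F.filter (fun y => y < τ₀)).max' hne, ?_, ?_⟩
        · have hmem := (F.filter (fun y => y < τ₀)).max'_mem hne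
          exact (Finset.mem_filter.mp hmem).2
        · intro y hy hylt
          exact (F.filter (fun y => y < τ₀)).le_max' y
            (Finset.mem_filter.mpr ⟨hy, hylt⟩)
      · refine ⟨0, hτ₀pos, fun y hy hylt => absurd ?_ hne⟩
        exact ⟨y, Finset.mem_filter.mpr ⟨hy, hylt⟩⟩
    refine ⟨τ₀ - s₀, by linarith, fun {s} hsIio hdist => ?_⟩
    have hsIio' : s < τ₀ := hsIio
    rw [Real.dist_eq] at hdist
    have hs₀s : s₀ < s := by
      rw [abs_of_nonpos (by linarith)] at hdist
      linarith
    set B : Set ℝ := T ∩ Set.Iic s with hB_def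
    have hBS : B ⊆ S := fun y hy => ⟨hy.1, lt_of_le_of_lt hy.2 hsIio'⟩
    have hBA : B ⊆ A := hBS.trans hSsubA
    have hdiffA : S \ B ⊆ A := Set.diff_subset.trans hSsubA
    have hSummB : Summable (B.indicator g) := summable_subtype_iff_indicator.mp (hsub B hBA)
    have hSummDiff : Summable ((S \ B).indicator g) :=
      summable_subtype_iff_indicator.mp (hsub _ hdiffA)
    have hsplit : S.indicator g = B.indicator g + (S \ B).indicator g := by
      funext y
      by_cases hyB : y ∈ B
      · simp [Set.indicator_of_mem hyB, Set.indicator_of_mem (hBS hyB),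
          Set.indicator_of_notMem (fun hc : y ∈ S \ B => hc.2 hyB)]
      · by_cases hyS : y ∈ S
        · simp [Set.indicator_of_mem hyS, Set.indicator_of_notMem hyB,
            Set.indicator_of_mem (show y ∈ S \ B from ⟨hyS, hyB⟩)]
        · simp [Set.indicator_of_notMem hyS, Set.indicator_of_notMem hyB,
            Set.indicator_of_notMem (fun hc : y ∈ S \ B => hyS hc.1)]
    have e1 : ∑' τ : ↥B, g ↑τ = ∑' y, B.indicator g y := tsum_subtype B g
    have e2 : ∑' τ : ↥S, g ↑τ = ∑' y, S.indicator g y := tsum_subtype S g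
    have e4 : (∑' y, S.indicator g y)
        = (∑' y, B.indicator g y) + ∑' y, (S \ B).indicator g y := by
      rw [hsplit]
      exact Summable.tsum_add hSummB hSummDiff
    rw [Real.dist_eq, e1, e2, e4]
    have habsdiff : (fun y => |(S \ B).indicator g y|) = (S \ B).indicator (fun y => |g y|) := by
      funext y
      by_cases hy : y ∈ S \ B <;> simp [hy]
    have hSummDiffAbs : Summable ((S \ B).indicator (fun y => |g y|)) := habs _ hdiffA
    have hb1 : |∑' y, (S \ B).indicator g y| ≤ ∑' y, (S \ B).indicator (fun y => |g y|) y := by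
      have h1 : Summable fun y => ‖(S \ B).indicator g y‖ := by
        refine hSummDiffAbs.congr fun y => ?_
        rw [Real.norm_eq_abs]
        exact (congrFun habsdiff y).symm
      have h2 := norm_tsum_le_tsum_norm h1
      have heq2 : ∑' y, ‖(S \ B).indicator g y‖ = ∑' y, (S \ B).indicator (fun y => |g y|) y :=
        tsum_congr fun y => by rw [Real.norm_eq_abs]; exact congrFun habsdiff y
      rw [Real.norm_eq_abs, heq2] at h2
      exact h2
    have hble : ∀ y, (S \ B).indicator (fun y => |g y|) y ≤ {y | y ∉ F}.indicator h y := by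
      intro y
      by_cases hy : y ∈ S \ B
      · have hyS : y ∈ S := hy.1
        have hys : s < y := by
          by_contra hle
          push_neg at hle
          exact hy.2 ⟨hyS.1, hle⟩
        have hyF : y ∉ F := by
          intro hmem
          have := hs₀ y hmem hyS.2
          linarith
        rw [Set.indicator_of_mem hy, Set.indicator_of_mem (show y ∈ {y | y ∉ F} from hyF),
          hh_def, Set.indicator_of_mem hyS]
      · rw [Set.indicator_of_notMem hy]
        exact Set.indicator_nonneg (fun z _ => hhnonneg z) y
    have hSummInd : Summable ({y | y ∉ F}.indicator h) := hhsum.indicator _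
    have hb2 : (∑' y, (S \ B).indicator (fun y => |g y|) y) ≤ ∑' y, {y | y ∉ F}.indicator h y :=
      Summable.tsum_le_tsum hble hSummDiffAbs hSummInd
    have e5 : ∑' τ : {y // y ∉ F}, h ↑τ = ∑' y, {y | y ∉ F}.indicator h y :=
      tsum_subtype {y | y ∉ F} h
    rw [e5] at hFlt
    calc |(∑' y, B.indicator g y)
        - ((∑' y, B.indicator g y) + ∑' y, (S \ B).indicator g y)|
        = |∑' y, (S \ B).indicator g y| := by rw [abs_sub_comm]; ring_nf
      _ ≤ ∑' y, (S \ B).indicator (fun y => |g y|) y := hb1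
      _ ≤ ∑' y, {y | y ∉ F}.indicator h y := hb2
      _ < ε := hFlt
  -- combine
  have hexp : Tendsto (fun s => Real.exp (-μ * s)) (nhdsWithin τ₀ (Set.Iio τ₀))
      (nhds (Real.exp (-μ * τ₀))) :=
    ((Real.continuous_exp.comp (continuous_const.mul continuous_id)).tendsto τ₀).mono_left
      nhdsWithin_le_nhds
  have hmain : Tendsto
      (fun s => 1 - Real.exp (-μ * s) * Real.exp (∑' τ : ↥(T ∩ Set.Iic s), g ↑τ))
      (nhdsWithin τ₀ (Set.Iio τ₀))
      (nhds (1 - Real.exp (-μ * τ₀) * Real.exp (∑' τ : ↥S, g ↑τ))) :=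
    tendsto_const_nhds.sub (hexp.mul ((Real.continuous_exp.tendsto _).comp hF))
  apply hmain.congr'
  have hpos : ∀ᶠ s in nhdsWithin τ₀ (Set.Iio τ₀), 0 < s :=
    eventually_nhdsWithin_of_eventually_nhds (eventually_gt_nhds hτ₀pos)
  filter_upwards [hpos, eventually_mem_nhdsWithin] with s hs hsmem
  rw [hZ s hs.le, hprod s (le_of_lt hsmem)]
end

section
/- For every t ∈ ℝ, the total mass of all litters alive at time t is at most 1: ∑_{τ ∈ T, τ ≤ t} x_τ · e^{-μ(t-τ)} · ∏_{σ ∈ T, τ < σ ≤ t} (1 - x_σ) ≤ 1. (Consequently ρ_t := ∑_i X_i(t) δ_{R_i} + (1 - ∑_i X_i(t)) λ, where X_i(t) are these litter masses and λ is Lebesgue measure on [0,1], is a well-defined probability measure.) -/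
open MeasureTheory Filter

section Aux

variable {ι : Type*} {f : ι → ℝ}

private lemma aux_hasProd (h0 : ∀ i, 0 ≤ f i) (h1 : ∀ i, f i ≤ 1) :
    HasProd f (⨅ s : Finset ι, ∏ i ∈ s, f i) := by
  classical
  apply tendsto_atTop_ciInf
  · intro s t hst
    have := Finset.prod_sdiff hst (f := f)
    have h2 : ∏ i ∈ t \ s, f i ≤ 1 := Finset.prod_le_one (fun i _ => h0 i) (fun i _ => h1 i)
    have h3 : 0 ≤ ∏ i ∈ s, f i := Finset.prod_nonneg (fun i _ => h0 i)
    nlinarith [Finset.prod_nonneg (fun i (_ : i ∈ t \ s) => h0 i)]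
  · exact ⟨0, by rintro _ ⟨s, rfl⟩; exact Finset.prod_nonneg (fun i _ => h0 i)⟩

private lemma aux_tprod_eq (h0 : ∀ i, 0 ≤ f i) (h1 : ∀ i, f i ≤ 1) :
    ∏' i, f i = ⨅ s : Finset ι, ∏ i ∈ s, f i :=
  (aux_hasProd h0 h1).tprod_eq

private lemma aux_tprod_nonneg (h0 : ∀ i, 0 ≤ f i) (h1 : ∀ i, f i ≤ 1) :
    0 ≤ ∏' i, f i := by
  rw [aux_tprod_eq h0 h1]
  exact le_ciInf (fun s => Finset.prod_nonneg (fun i _ => h0 i))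

private lemma aux_tprod_le_prod (h0 : ∀ i, 0 ≤ f i) (h1 : ∀ i, f i ≤ 1) (G : Finset ι) :
    ∏' i, f i ≤ ∏ i ∈ G, f i := by
  rw [aux_tprod_eq h0 h1]
  exact ciInf_le ⟨0, by rintro _ ⟨s, rfl⟩; exact Finset.prod_nonneg (fun i _ => h0 i)⟩ G

private lemma aux_telescope {ι : Type*} [LinearOrder ι] (y : ι → ℝ) (F : Finset ι) :
    ∑ τ ∈ F, (y τ * ∏ σ ∈ F.filter (fun σ => τ < σ), (1 - y σ))
      = 1 - ∏ σ ∈ F, (1 - y σ) := by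
  classical
  induction F using Finset.induction_on_min with
  | empty => simp
  | insert a s ha ih =>
    have hanotin : a ∉ s := fun h => lt_irrefl a (ha a h)
    have hfa : (insert a s).filter (fun σ => a < σ) = s := by
      rw [Finset.filter_insert, if_neg (lt_irrefl a)]
      exact Finset.filter_true_of_mem (fun x hx => ha x hx)
    have hfs : ∀ τ ∈ s, (insert a s).filter (fun σ => τ < σ) = s.filter (fun σ => τ < σ) := by
      intro τ hτ
      rw [Finset.filter_insert, if_neg (not_lt_of_gt (ha τ hτ))]
    rw [Finset.sum_insert hanotin, Finset.prod_insert hanotin, hfa,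
      Finset.sum_congr rfl (fun τ hτ => by rw [hfs τ hτ]), ih]
    ring

end Aux

/-- **The total mass of all litters alive at time `t` is at most 1.**
Let `μ ≥ 0`, let `T ⊆ ℝ` be a countable set of birth times with original litter sizes
`x τ ∈ (0,1)` satisfying the local summability `∑_{τ ∈ T, s ≤ τ ≤ t} x τ < ∞` for all
`s ≤ t`. The size at time `t` of the litter born at time `τ ≤ t` is
`X τ t = x τ · e^{-μ (t - τ)} · ∏_{σ ∈ T, τ < σ ≤ t} (1 - x σ)`.
Then for every `t ∈ ℝ` the family `(X τ t)_{τ ∈ T, τ ≤ t}` is summable with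
`∑_{τ ∈ T, τ ≤ t} X τ t ≤ 1`
(so the population measure `ρ_t = ∑ᵢ Xᵢ(t) δ_{Rᵢ} + (1 - ∑ᵢ Xᵢ(t)) λ` is a
well-defined probability measure). -/
theorem total_litter_mass_le_one
    (μ : ℝ) (hμ : 0 ≤ μ)
    (T : Set ℝ) (hTcount : T.Countable)
    (x : ℝ → ℝ) (hx : ∀ τ ∈ T, x τ ∈ Set.Ioo (0:ℝ) 1)
    (hsum : ∀ s t : ℝ, s ≤ t → Summable (fun τ : ↥(T ∩ Set.Icc s t) => x ↑τ))
    (X : ℝ → ℝ → ℝ)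
    (hX : ∀ τ t : ℝ, τ ≤ t →
      X τ t = x τ * Real.exp (-μ * (t - τ)) *
        ∏' σ : ↥(T ∩ Set.Ioc τ t), (1 - x ↑σ))
    (t : ℝ) :
    Summable (fun τ : ↥(T ∩ Set.Iic t) => X ↑τ t) ∧
    ∑' τ : ↥(T ∩ Set.Iic t), X ↑τ t ≤ 1 := by
  classical
  -- factors of the infinite product are in [0,1]
  have hfac0 : ∀ (τ : ℝ), ∀ σ : ↥(T ∩ Set.Ioc τ t), 0 ≤ 1 - x ↑σ := by
    intro τ σ; have := hx σ.1 σ.2.1; linarith [this.2]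
  have hfac1 : ∀ (τ : ℝ), ∀ σ : ↥(T ∩ Set.Ioc τ t), 1 - x ↑σ ≤ 1 := by
    intro τ σ; have := hx σ.1 σ.2.1; linarith [this.1]
  -- nonnegativity of each term
  have hXnonneg : ∀ τ : ↥(T ∩ Set.Iic t), 0 ≤ X ↑τ t := by
    intro τ
    rw [hX τ.1 t τ.2.2]
    have h1 : 0 < x ↑τ := (hx τ.1 τ.2.1).1
    have h2 : (0:ℝ) < Real.exp (-μ * (t - ↑τ)) := Real.exp_pos _
    have h3 : 0 ≤ ∏' σ : ↥(T ∩ Set.Ioc (τ:ℝ) t), (1 - x ↑σ) :=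
      aux_tprod_nonneg (hfac0 τ) (hfac1 τ)
    positivity
  -- key finite bound
  have key : ∀ F : Finset ↥(T ∩ Set.Iic t), ∑ τ ∈ F, X ↑τ t ≤ 1 := by
    intro F
    have hterm : ∀ τ ∈ F, X ↑τ t ≤
        x ↑τ * ∏ σ ∈ F.filter (fun σ => τ < σ), (1 - x ↑σ) := by
      intro τ hτF
      rw [hX τ.1 t τ.2.2]
      set S : Set ℝ := T ∩ Set.Ioc (τ:ℝ) t with hS
      -- embed the filtered finset into the subtype of S
      set Ffil := F.filter (fun σ => τ < σ) with hFfil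
      have hmem : ∀ σ : {σ // σ ∈ Ffil}, (σ.1.1 : ℝ) ∈ S := by
        intro σ
        have hlt : (τ:ℝ) < σ.1.1 := (Finset.mem_filter.mp σ.2).2
        exact ⟨σ.1.2.1, hlt, σ.1.2.2⟩
      set e : {σ // σ ∈ Ffil} → ↥S := fun σ => ⟨σ.1.1, hmem σ⟩ with he
      have hinj : Function.Injective e := by
        intro a b hab
        have h' := congrArg Subtype.val hab
        rw [Subtype.ext_iff, Subtype.ext_iff]
        exact h'
      set G : Finset ↥S := Ffil.attach.image e with hG
      have hprodG : ∏ σ ∈ G, (1 - x ↑σ) = ∏ σ ∈ Ffil, (1 - x ↑σ) := by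
        rw [hG, Finset.prod_image (fun a _ b _ h => hinj h)]
        exact Finset.prod_attach Ffil (fun σ => 1 - x ↑σ)
      have hPle : (∏' σ : ↥S, (1 - x ↑σ)) ≤ ∏ σ ∈ Ffil, (1 - x ↑σ) := by
        rw [← hprodG]
        exact aux_tprod_le_prod (hfac0 τ) (hfac1 τ) G
      have hP0 : 0 ≤ ∏' σ : ↥S, (1 - x ↑σ) := aux_tprod_nonneg (hfac0 τ) (hfac1 τ)
      have hx0 : 0 < x ↑τ := (hx τ.1 τ.2.1).1
      have hexp1 : Real.exp (-μ * (t - ↑τ)) ≤ 1 := by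
        rw [Real.exp_le_one_iff]
        have h1 : (τ:ℝ) ≤ t := τ.2.2
        nlinarith
      have hexp0 : (0:ℝ) < Real.exp (-μ * (t - ↑τ)) := Real.exp_pos _
      have hprod0 : 0 ≤ ∏ σ ∈ Ffil, (1 - x ↑σ) :=
        Finset.prod_nonneg (fun σ hσ => by
          have := hx σ.1 σ.2.1; linarith [this.2])
      have h1 : x ↑τ * Real.exp (-μ * (t - ↑τ)) * (∏' σ : ↥S, (1 - x ↑σ))
          ≤ x ↑τ * (∏' σ : ↥S, (1 - x ↑σ)) := by
        nlinarith [mul_nonneg hx0.le hP0]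
      have h2 : x ↑τ * (∏' σ : ↥S, (1 - x ↑σ)) ≤ x ↑τ * ∏ σ ∈ Ffil, (1 - x ↑σ) :=
        mul_le_mul_of_nonneg_left hPle hx0.le
      linarith
    calc ∑ τ ∈ F, X ↑τ t
        ≤ ∑ τ ∈ F, (x ↑τ * ∏ σ ∈ F.filter (fun σ => τ < σ), (1 - x ↑σ)) :=
          Finset.sum_le_sum hterm
      _ = 1 - ∏ σ ∈ F, (1 - x ↑σ) :=
          aux_telescope (fun σ : ↥(T ∩ Set.Iic t) => x ↑σ) F
      _ ≤ 1 := by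
          have : 0 ≤ ∏ σ ∈ F, (1 - x (σ:ℝ)) :=
            Finset.prod_nonneg (fun σ hσ => by have := hx σ.1 σ.2.1; linarith [this.2])
          linarith
  have hsummable : Summable (fun τ : ↥(T ∩ Set.Iic t) => X ↑τ t) :=
    summable_of_sum_le hXnonneg key
  exact ⟨hsummable, Summable.tsum_le_of_sum_le hsummable key⟩
end
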